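/- arXiv:1104.4972 — 2 statements merged into one kernel-verified Lean document; each statement's English description precedes it below -/
import Mathlib

section
/- The kernel of the homomorphism SL(2,ℂ) → O(1,3) induced by the action v ↦ A v A* on Hermitian 2×2 matrices is {I, −I}. -/
/-- The kernel of `SL(2,ℂ) → O(1,3)`, induced by the action `v ↦ A v A*` on Hermitian
2×2 matrices, is `{I, −I}`. -/
theorem kernel_sl2c_to_lorentz (A : Matrix (Fin 2) (Fin 2) ℂ) (hA : A.det = 1) :
    (∀ v : Matrix (Fin 2) (Fin 2) ℂ, v.IsHermitian → A * v * A.conjTranspose = v)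
      ↔ (A = 1 ∨ A = -1) := by
  constructor
  · intro h
    set a := A 0 0 with ha
    set b := A 0 1 with hb
    set c := A 1 0 with hc
    set d := A 1 1 with hd
    have hv1 : (!![1,0;0,0] : Matrix (Fin 2) (Fin 2) ℂ).IsHermitian := by
      ext i j; fin_cases i <;> fin_cases j <;> simp [Matrix.conjTranspose_apply]
    have hv2 : (!![0,1;1,0] : Matrix (Fin 2) (Fin 2) ℂ).IsHermitian := by
      ext i j; fin_cases i <;> fin_cases j <;> simp [Matrix.conjTranspose_apply]
    have hv3 : (!![0,Complex.I;-Complex.I,0] : Matrix (Fin 2) (Fin 2) ℂ).IsHermitian := by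
      ext i j; fin_cases i <;> fin_cases j <;>
        simp [Matrix.conjTranspose_apply, Complex.conj_I]
    have e1 := h _ hv1
    have e2 := h _ hv2
    have e3 := h _ hv3
    -- c = 0 from entry (1,1) of e1
    have hc0 : c = 0 := by
      have := Matrix.ext_iff.mpr e1 1 1
      simpa [Matrix.mul_apply, Fin.sum_univ_two, Matrix.conjTranspose_apply, ← hc] using this
    have haa : a * (starRingEnd ℂ) a = 1 := by
      have := Matrix.ext_iff.mpr e1 0 0
      simpa [Matrix.mul_apply, Fin.sum_univ_two, Matrix.conjTranspose_apply, ← ha] using this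
    have hane : a ≠ 0 := by
      intro h0; rw [h0] at haa; simp at haa
    -- from e2 entry (0,0): b * star a + a * star b = 0
    have he2 : b * (starRingEnd ℂ) a + a * (starRingEnd ℂ) b = 0 := by
      have := Matrix.ext_iff.mpr e2 0 0
      simp [Matrix.mul_apply, Fin.sum_univ_two, Matrix.conjTranspose_apply, ← ha, ← hb, ← hc,
        hc0] at this
      linear_combination this
    -- from e3 entry (0,0)
    have he3 : a * (starRingEnd ℂ) b = b * (starRingEnd ℂ) a := by
      have := Matrix.ext_iff.mpr e3 0 0
      simp [Matrix.mul_apply, Fin.sum_univ_two, Matrix.conjTranspose_apply, ← ha, ← hb, ← hc,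
        hc0] at this
      linear_combination (-Complex.I) * this +
        (a * (starRingEnd ℂ) b - b * (starRingEnd ℂ) a) * Complex.I_mul_I
    have hba : b * (starRingEnd ℂ) a = 0 := by linear_combination (he2 + he3)/2 - he3
    have hb0 : b = 0 := by
      have hsa : (starRingEnd ℂ) a ≠ 0 := by
        simpa using star_ne_zero.mpr hane
      exact (mul_eq_zero.mp hba).resolve_right hsa
    -- det: a*d - b*c = 1
    have hdet : a * d = 1 := by
      have := hA
      rw [Matrix.det_fin_two] at this
      rw [← ha, ← hb, ← hc, ← hd, hb0, hc0] at this
      linear_combination this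
    -- from e2 entry (0,1): a * star d = 1
    have had : a * (starRingEnd ℂ) d = 1 := by
      have := Matrix.ext_iff.mpr e2 0 1
      simpa [Matrix.mul_apply, Fin.sum_univ_two, Matrix.conjTranspose_apply, ← ha, ← hb, ← hc,
        ← hd, hc0, hb0] using this
    have hda : d = a := by
      have h1 : (starRingEnd ℂ) d = (starRingEnd ℂ) a := mul_left_cancel₀ hane (had.trans haa.symm)
      have := congrArg (starRingEnd ℂ) h1
      simpa using this
    have ha2 : a * a = 1 := by rw [hda] at hdet; exact hdet
    have : a = 1 ∨ a = -1 := by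
      have : (a - 1) * (a + 1) = 0 := by ring_nf; linear_combination ha2
      rcases mul_eq_zero.mp this with h' | h'
      · left; exact sub_eq_zero.mp h'
      · right; linear_combination h'
    rcases this with h' | h'
    · left; ext i j; fin_cases i <;> fin_cases j <;>
        simp [← ha, ← hb, ← hc, ← hd, hb0, hc0, hda, h', Matrix.one_apply]
    · right; ext i j; fin_cases i <;> fin_cases j <;>
        simp [← ha, ← hb, ← hc, ← hd, hb0, hc0, hda, h', Matrix.one_apply]
  · rintro (rfl | rfl) v hv <;> simp [Matrix.IsHermitian] at hv ⊢
end

section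
/- The projections Π and its ♯-conjugate commute: Π^A{}_B Π^{♯B}{}_{♯C} = Π^{♯A}{}_{♯B} Π^B{}_C. -/
/-- The antisymmetric epsilon symbol on `{0,1}` with `ε 0 1 = 1`. -/
def eps (a b : Fin 2) : ℂ := if a < b then 1 else if b < a then -1 else 0

/-- The Kronecker delta. -/
def kdelta (a b : Fin 2) : ℂ := if a = b then 1 else 0

/-- Capital index type: four coordinate indices plus quadruple spinor indices. -/
abbrev Idx : Type := Fin 4 ⊕ (Fin 2 × Fin 2 × Fin 2 × Fin 2)

/-- Total symmetrizer of `k` spinor indices. -/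
noncomputable def symk {k : ℕ} (up lo : Fin k → Fin 2) : ℂ :=
  (Nat.factorial k : ℂ)⁻¹ * ∑ π : Equiv.Perm (Fin k), ∏ i, kdelta (up i) (lo (π i))

/-- The projection `Π_{a₁…a_k}^{A b₁…b_k}{}_B`: zero if `A` or `B` is a coordinate index,
and otherwise given by
`Π_{a₁…a_k c₁c₂}^{c₃c₄ b₁…b_k d₁d₂}{}_{d₃d₄}
  = δ_{c₁}^{d₁} δ^{c₃}_{d₃} ε^{c₄e} ε_{d₄f} S^{b₁…b_k d₂ f}_{a₁…a_k c₂ e}`. -/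
noncomputable def PiProj {k : ℕ} (lo up : Fin k → Fin 2) (A B : Idx) : ℂ :=
  match A, B with
  | Sum.inr (c1, c2, c3, c4), Sum.inr (d1, d2, d3, d4) =>
      kdelta c1 d1 * kdelta c3 d3 *
        ∑ e : Fin 2, ∑ f : Fin 2, eps c4 e * eps d4 f *
          symk (Fin.snoc (Fin.snoc up d2) f) (Fin.snoc (Fin.snoc lo c2) e)
  | _, _ => 0

/-- The `♯` operation: swap the order within each spinor index pair. -/
def sharp : Idx → Idx
  | Sum.inl α => Sum.inl α
  | Sum.inr (i, j, k, l) => Sum.inr (j, i, l, k)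

/-- The `&` prefix: `f^{&A} = Π^A{}_B Π^{♯B}{}_{♯C} f^C`. -/
noncomputable def amp (f : Idx → ℂ) (A : Idx) : ℂ :=
  ∑ B : Idx, ∑ C : Idx,
    PiProj (k := 0) ![] ![] A B * PiProj (k := 0) ![] ![] (sharp B) (sharp C) * f C

/-! ### Auxiliary integer-valued analogues -/

def epsZ (a b : Fin 2) : ℤ := if a < b then 1 else if b < a then -1 else 0
def kdeltaZ (a b : Fin 2) : ℤ := if a = b then 1 else 0

/-- Integer analogue of `2 * PiProj (k := 0) ![] ![]`. -/
def PiProjZ (A B : Idx) : ℤ :=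
  match A, B with
  | Sum.inr (c1, c2, c3, c4), Sum.inr (d1, d2, d3, d4) =>
      kdeltaZ c1 d1 * kdeltaZ c3 d3 *
        ∑ e : Fin 2, ∑ f : Fin 2, epsZ c4 e * epsZ d4 f *
          (kdeltaZ d2 c2 * kdeltaZ f e + kdeltaZ d2 e * kdeltaZ f c2)
  | _, _ => 0

lemma eps_cast (a b : Fin 2) : eps a b = (epsZ a b : ℂ) := by
  simp only [eps, epsZ]; split_ifs <;> norm_num

lemma kdelta_cast (a b : Fin 2) : kdelta a b = (kdeltaZ a b : ℂ) := by
  simp only [kdelta, kdeltaZ]; split_ifs <;> norm_num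

lemma univ_perm_fin_two : (Finset.univ : Finset (Equiv.Perm (Fin 2))) = {1, Equiv.swap 0 1} := by
  decide

lemma symk_two (up lo : Fin 2 → Fin 2) :
    symk up lo = (2 : ℂ)⁻¹ *
      (kdelta (up 0) (lo 0) * kdelta (up 1) (lo 1) +
        kdelta (up 0) (lo 1) * kdelta (up 1) (lo 0)) := by
  rw [symk, univ_perm_fin_two]
  rw [Finset.sum_pair (by decide : (1 : Equiv.Perm (Fin 2)) ≠ Equiv.swap 0 1)]
  simp [Fin.prod_univ_two, Nat.factorial]

lemma snoc0 : ∀ x y : Fin 2,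
    (Fin.snoc (Fin.snoc (![] : Fin 0 → Fin 2) x) y : Fin 2 → Fin 2) 0 = x := by decide

lemma snoc1 : ∀ x y : Fin 2,
    (Fin.snoc (Fin.snoc (![] : Fin 0 → Fin 2) x) y : Fin 2 → Fin 2) 1 = y := by decide

lemma piProj_cast (A B : Idx) :
    PiProj (k := 0) ![] ![] A B = (PiProjZ A B : ℂ) / 2 := by
  rcases A with a | ⟨c1,c2,c3,c4⟩ <;> rcases B with b | ⟨d1,d2,d3,d4⟩ <;>
    simp only [PiProj, PiProjZ, Int.cast_zero, zero_div]
  simp only [symk_two, snoc0, snoc1, eps_cast, kdelta_cast, Fin.sum_univ_two]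
  push_cast
  ring

/-- The projections `Π` and its `♯`-conjugate commute:
`Π^A{}_B Π^{♯B}{}_{♯C} = Π^{♯A}{}_{♯B} Π^B{}_C`. -/
theorem piProj_sharp_commute (A C : Idx) :
    (∑ B : Idx, PiProj (k := 0) ![] ![] A B * PiProj (k := 0) ![] ![] (sharp B) (sharp C))
      = ∑ B : Idx, PiProj (k := 0) ![] ![] (sharp A) (sharp B) * PiProj (k := 0) ![] ![] B C := by
  have h : ∀ A C : Idx,
      (∑ B : Idx, PiProjZ A B * PiProjZ (sharp B) (sharp C))
        = ∑ B : Idx, PiProjZ (sharp A) (sharp B) * PiProjZ B C := by decide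
  calc (∑ B : Idx, PiProj (k := 0) ![] ![] A B * PiProj (k := 0) ![] ![] (sharp B) (sharp C))
      = ((∑ B : Idx, PiProjZ A B * PiProjZ (sharp B) (sharp C) : ℤ) : ℂ) / 4 := by
        simp only [piProj_cast]; push_cast
        rw [Finset.sum_div]
        exact Finset.sum_congr rfl fun B _ => by ring
    _ = ((∑ B : Idx, PiProjZ (sharp A) (sharp B) * PiProjZ B C : ℤ) : ℂ) / 4 := by rw [h]
    _ = _ := by
        simp only [piProj_cast]; push_cast
        rw [Finset.sum_div]
        exact (Finset.sum_congr rfl fun B _ => by ring).symm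
end
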